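/- arXiv:2503.15824 — 2 statements merged into one kernel-verified Lean document; each statement's English description precedes it below -/
import Mathlib

section
/- (Theorem 3.1) For every δ ≥ 0: the function q_δ belongs to M(μ,σ), and for every q ∈ M(μ,σ) one has J_δ(q) ≤ μ − δ(ε_min + 2σσ_F) + σσ_δ, with equality if and only if q = q_δ almost everywhere on (0,1). In particular sup_{q ∈ M(μ,σ)} J_δ(q) = μ − δ(ε_min + 2σσ_F) + σσ_δ, attained uniquely (up to a.e. equality) at q_δ. -/
open MeasureTheory Set Filter

noncomputable section

/-- Integral over the interval (0,1) with Lebesgue measure. -/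
def intI (f : ℝ → ℝ) : ℝ := ∫ u in Ioo (0:ℝ) 1, f u

/-- Square integrability on (0,1). -/
def SqInt (f : ℝ → ℝ) : Prop :=
  IntegrableOn f (Ioo (0:ℝ) 1) volume ∧ IntegrableOn (fun u => f u ^ 2) (Ioo (0:ℝ) 1) volume

/-- A quantile function: nondecreasing and square-integrable on (0,1). -/
def IsQuantile (q : ℝ → ℝ) : Prop := MonotoneOn q (Ioo (0:ℝ) 1) ∧ SqInt q

/-- Membership in `M(μ,σ)` : quantile function with prescribed first two moments. -/
def MemM (μ σ : ℝ) (q : ℝ → ℝ) : Prop :=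
  IsQuantile q ∧ intI q = μ ∧ intI (fun u => q u ^ 2) = μ ^ 2 + σ ^ 2

/-- Squared Wasserstein distance between (quantile) functions on (0,1). -/
def W2 (p q : ℝ → ℝ) : ℝ := intI (fun u => (p u - q u) ^ 2)

/-- Almost-everywhere equality on (0,1). -/
def AeEqI (f g : ℝ → ℝ) : Prop := f =ᵐ[(volume : Measure ℝ).restrict (Ioo (0:ℝ) 1)] g

/-- The penalized objective `J_δ(q) = ∫ γ q − δ d²(q_F, q)`. -/
def Jpen (γ qF : ℝ → ℝ) (δ : ℝ) (q : ℝ → ℝ) : ℝ :=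
  intI (fun u => γ u * q u) - δ * W2 qF q

/-- `σ_δ = sqrt(σ₀² + 4δ²σ_F² + 4δσ₀σ_Fρ)`. -/
def sigD (σ0 σF ρ δ : ℝ) : ℝ := Real.sqrt (σ0 ^ 2 + 4 * δ ^ 2 * σF ^ 2 + 4 * δ * σ0 * σF * ρ)

/-- The candidate optimizer `q_δ(u) = μ − (σ/σ_δ) μ_δ + (σ/σ_δ)(γ(u) + 2δ q_F(u))`,
where `μ_δ = 1 + 2δμ_F`. -/
def qD (μ σ μF σ0 σF ρ δ : ℝ) (γ qF : ℝ → ℝ) : ℝ → ℝ := fun u =>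
  μ - σ / sigD σ0 σF ρ δ * (1 + 2 * δ * μF) + σ / sigD σ0 σF ρ δ * (γ u + 2 * δ * qF u)

abbrev I01 : Set ℝ := Ioo (0:ℝ) 1
abbrev nuI : Measure ℝ := (volume : Measure ℝ).restrict I01

instance : IsProbabilityMeasure nuI := ⟨by simp [Real.volume_Ioo]⟩

def SqInt' (f : ℝ → ℝ) : Prop :=
  Integrable f nuI ∧ Integrable (fun u => f u ^ 2) nuI

lemma integrable_mul' {f h : ℝ → ℝ} (hf : SqInt' f) (hh : SqInt' h) :
    Integrable (fun u => f u * h u) nuI := by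
  refine Integrable.mono' ((hf.2.add hh.2).div_const 2)
    (hf.1.aestronglyMeasurable.mul hh.1.aestronglyMeasurable) ?_
  filter_upwards with u
  have := sq_nonneg (|f u| - |h u|)
  rw [Real.norm_eq_abs, abs_mul]
  simp only [Pi.add_apply]
  nlinarith [abs_nonneg (f u), abs_nonneg (h u), sq_abs (f u), sq_abs (h u)]

lemma chebyshev' {f h : ℝ → ℝ} (hf : MonotoneOn f I01) (hh : MonotoneOn h I01)
    (hfi : SqInt' f) (hhi : SqInt' h) :
    (∫ u, f u ∂nuI) * (∫ u, h u ∂nuI) ≤ ∫ u, f u * h u ∂nuI := by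
  have hfh : Integrable (fun u => f u * h u) nuI := integrable_mul' hfi hhi
  have h1 : Integrable (fun p : ℝ × ℝ => (f p.1 * h p.1) * (1:ℝ)) (nuI.prod nuI) :=
    hfh.mul_prod (integrable_const 1)
  have h2 : Integrable (fun p : ℝ × ℝ => (1:ℝ) * (f p.2 * h p.2)) (nuI.prod nuI) :=
    (integrable_const 1).mul_prod hfh
  have h3 : Integrable (fun p : ℝ × ℝ => f p.1 * h p.2) (nuI.prod nuI) :=
    hfi.1.mul_prod hhi.1
  have h4 : Integrable (fun p : ℝ × ℝ => h p.1 * f p.2) (nuI.prod nuI) :=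
    hhi.1.mul_prod hfi.1
  have key : 0 ≤ ∫ p : ℝ × ℝ, (f p.1 - f p.2) * (h p.1 - h p.2) ∂(nuI.prod nuI) := by
    apply integral_nonneg_of_ae
    rw [show nuI.prod nuI = ((volume : Measure ℝ).prod volume).restrict (I01 ×ˢ I01) from
      Measure.prod_restrict _ _]
    refine ae_restrict_of_forall_mem (measurableSet_Ioo.prod measurableSet_Ioo) fun p hp => ?_
    obtain ⟨hx, hy⟩ := hp
    simp only [Pi.zero_apply]
    rcases le_total p.1 p.2 with hxy | hxy
    · have h5 := hf hx hy hxy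
      have h6 := hh hx hy hxy
      nlinarith
    · have h5 := hf hy hx hxy
      have h6 := hh hy hx hxy
      nlinarith
  have expand : (fun p : ℝ × ℝ => (f p.1 - f p.2) * (h p.1 - h p.2))
      = fun p : ℝ × ℝ => (f p.1 * h p.1) * 1 + 1 * (f p.2 * h p.2)
        - f p.1 * h p.2 - h p.1 * f p.2 := by
    funext p; ring
  have hi12 : Integrable (fun p : ℝ × ℝ => f p.1 * h p.1 * 1 + 1 * (f p.2 * h p.2))
      (nuI.prod nuI) := h1.add h2
  have hi123 : Integrable
      (fun p : ℝ × ℝ => f p.1 * h p.1 * 1 + 1 * (f p.2 * h p.2) - f p.1 * h p.2)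
      (nuI.prod nuI) := hi12.sub h3
  rw [expand, integral_sub hi123 h4, integral_sub hi12 h3,
    integral_add h1 h2,
    integral_prod_mul (f := fun x => f x * h x) (g := fun _ => (1 : ℝ)),
    integral_prod_mul (f := fun _ => (1 : ℝ)) (g := fun x => f x * h x),
    integral_prod_mul, integral_prod_mul] at key
  simp only [integral_const, measure_univ, ENNReal.toReal_one, probReal_univ, smul_eq_mul, one_mul, mul_one] at key
  linarith

lemma sqInt'_const (m : ℝ) : SqInt' (fun _ => m) :=
  ⟨integrable_const m, integrable_const (m ^ 2)⟩

lemma SqInt'.const_mul' {f : ℝ → ℝ} (hf : SqInt' f) (c : ℝ) : SqInt' (fun u => c * f u) := by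
  refine ⟨hf.1.const_mul c, ?_⟩
  have : (fun u => (c * f u) ^ 2) = fun u => c ^ 2 * f u ^ 2 := by funext u; ring
  rw [this]; exact hf.2.const_mul _

lemma SqInt'.add' {f h : ℝ → ℝ} (hf : SqInt' f) (hh : SqInt' h) :
    SqInt' (fun u => f u + h u) := by
  refine ⟨hf.1.add hh.1, ?_⟩
  have : (fun u => (f u + h u) ^ 2) = fun u => (f u ^ 2 + 2 * (f u * h u)) + h u ^ 2 := by
    funext u; ring
  rw [this]
  exact (hf.2.add ((integrable_mul' hf hh).const_mul 2)).add hh.2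

lemma SqInt'.sub' {f h : ℝ → ℝ} (hf : SqInt' f) (hh : SqInt' h) :
    SqInt' (fun u => f u - h u) := by
  have : (fun u => f u - h u) = fun u => f u + (-1) * h u := by funext u; ring
  rw [this]; exact hf.add' (hh.const_mul' (-1))

lemma integrable_comb6 {f1 f2 f3 f4 f5 f6 : ℝ → ℝ}
    (h1 : Integrable f1 nuI) (h2 : Integrable f2 nuI) (h3 : Integrable f3 nuI)
    (h4 : Integrable f4 nuI) (h5 : Integrable f5 nuI) (h6 : Integrable f6 nuI)
    (a c1 c2 c3 c4 c5 c6 : ℝ) :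
    Integrable (fun u => a + c1 * f1 u + c2 * f2 u + c3 * f3 u + c4 * f4 u
      + c5 * f5 u + c6 * f6 u) nuI := by
  have i1 : Integrable (fun u => a + c1 * f1 u) nuI :=
    (integrable_const a).add (h1.const_mul c1)
  have i2 : Integrable (fun u => a + c1 * f1 u + c2 * f2 u) nuI := i1.add (h2.const_mul c2)
  have i3 : Integrable (fun u => a + c1 * f1 u + c2 * f2 u + c3 * f3 u) nuI :=
    i2.add (h3.const_mul c3)
  have i4 : Integrable (fun u => a + c1 * f1 u + c2 * f2 u + c3 * f3 u + c4 * f4 u) nuI :=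
    i3.add (h4.const_mul c4)
  have i5 : Integrable (fun u => a + c1 * f1 u + c2 * f2 u + c3 * f3 u + c4 * f4 u
      + c5 * f5 u) nuI := i4.add (h5.const_mul c5)
  exact i5.add (h6.const_mul c6)

lemma int_comb6 {f1 f2 f3 f4 f5 f6 : ℝ → ℝ}
    (h1 : Integrable f1 nuI) (h2 : Integrable f2 nuI) (h3 : Integrable f3 nuI)
    (h4 : Integrable f4 nuI) (h5 : Integrable f5 nuI) (h6 : Integrable f6 nuI)
    (a c1 c2 c3 c4 c5 c6 : ℝ) :
    ∫ u, (a + c1 * f1 u + c2 * f2 u + c3 * f3 u + c4 * f4 u + c5 * f5 u + c6 * f6 u) ∂nuI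
      = a + c1 * (∫ u, f1 u ∂nuI) + c2 * (∫ u, f2 u ∂nuI) + c3 * (∫ u, f3 u ∂nuI)
        + c4 * (∫ u, f4 u ∂nuI) + c5 * (∫ u, f5 u ∂nuI) + c6 * (∫ u, f6 u ∂nuI) := by
  have i1 : Integrable (fun u => a + c1 * f1 u) nuI :=
    (integrable_const a).add (h1.const_mul c1)
  have i2 : Integrable (fun u => a + c1 * f1 u + c2 * f2 u) nuI := i1.add (h2.const_mul c2)
  have i3 : Integrable (fun u => a + c1 * f1 u + c2 * f2 u + c3 * f3 u) nuI :=
    i2.add (h3.const_mul c3)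
  have i4 : Integrable (fun u => a + c1 * f1 u + c2 * f2 u + c3 * f3 u + c4 * f4 u) nuI :=
    i3.add (h4.const_mul c4)
  have i5 : Integrable (fun u => a + c1 * f1 u + c2 * f2 u + c3 * f3 u + c4 * f4 u
      + c5 * f5 u) nuI := i4.add (h5.const_mul c5)
  rw [integral_add i5 (h6.const_mul c6), integral_add i4 (h5.const_mul c5),
    integral_add i3 (h4.const_mul c4), integral_add i2 (h3.const_mul c3),
    integral_add i1 (h2.const_mul c2),
    integral_add (integrable_const a) (h1.const_mul c1),
    integral_const_mul, integral_const_mul, integral_const_mul, integral_const_mul,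
    integral_const_mul, integral_const_mul]
  simp [measure_univ]

set_option maxHeartbeats 2000000 in
theorem statement1
    (μ μF σ σF : ℝ) (hσpos : 0 < σ) (hσFpos : 0 < σF)
    (qF : ℝ → ℝ) (hqF : IsQuantile qF)
    (hqFm : intI qF = μF) (hqF2 : intI (fun u => qF u ^ 2) = μF ^ 2 + σF ^ 2)
    (γ : ℝ → ℝ) (hγmono : MonotoneOn γ (Ioo (0:ℝ) 1)) (hγsq : SqInt γ)
    (hγ1 : intI γ = 1)
    (σ0 : ℝ) (hσ0 : σ0 = Real.sqrt (intI (fun u => γ u ^ 2) - 1)) (hσ0pos : 0 < σ0)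
    (ρ : ℝ) (hρ : ρ = (intI (fun u => γ u * qF u) - μF) / (σ0 * σF))
    (εmin : ℝ) (hεmin : εmin = (μF - μ) ^ 2 + (σF - σ) ^ 2)
    (δ : ℝ) (hδ : 0 ≤ δ) :
    MemM μ σ (qD μ σ μF σ0 σF ρ δ γ qF) ∧
    ∀ q : ℝ → ℝ, MemM μ σ q →
      Jpen γ qF δ q ≤ μ - δ * (εmin + 2 * σ * σF) + σ * sigD σ0 σF ρ δ ∧
      (Jpen γ qF δ q = μ - δ * (εmin + 2 * σ * σF) + σ * sigD σ0 σF ρ δ ↔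
        AeEqI q (qD μ σ μF σ0 σF ρ δ γ qF)) := by

  have hγ' : SqInt' γ := ⟨hγsq.1, hγsq.2⟩
  have hqF' : SqInt' qF := ⟨hqF.2.1, hqF.2.2⟩
  have hqFmono : MonotoneOn qF I01 := hqF.1
  have e1 : ∫ u, γ u ∂nuI = 1 := hγ1
  have e2 : ∫ u, qF u ∂nuI = μF := hqFm
  have e3 : ∫ u, qF u ^ 2 ∂nuI = μF ^ 2 + σF ^ 2 := hqF2
  have hσ0' : σ0 = Real.sqrt ((∫ u, γ u ^ 2 ∂nuI) - 1) := hσ0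
  have hρ' : ρ = ((∫ u, γ u * qF u ∂nuI) - μF) / (σ0 * σF) := hρ
  have hEge : 1 ≤ ∫ u, γ u ^ 2 ∂nuI := by
    have h := chebyshev' hγmono hγmono hγ' hγ'
    rw [show (fun u => γ u * γ u) = fun u => γ u ^ 2 from funext fun u => by ring, e1] at h
    simpa using h
  have hCge : μF ≤ ∫ u, γ u * qF u ∂nuI := by
    have h := chebyshev' hγmono hqFmono hγ' hqF'
    rw [e1, e2] at h
    simpa using h
  have hσ0sq : σ0 ^ 2 = (∫ u, γ u ^ 2 ∂nuI) - 1 := by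
    rw [hσ0', Real.sq_sqrt (by linarith)]
  have hρval : σ0 * σF * ρ = (∫ u, γ u * qF u ∂nuI) - μF := by
    rw [hρ']; field_simp
  set sd := sigD σ0 σF ρ δ with hsd
  have hρnn : 0 ≤ δ * (σ0 * σF * ρ) := mul_nonneg hδ (by rw [hρval]; linarith)
  have harg : σ0 ^ 2 ≤ σ0 ^ 2 + 4 * δ ^ 2 * σF ^ 2 + 4 * δ * σ0 * σF * ρ := by
    have a1 : (0:ℝ) ≤ 4 * δ ^ 2 * σF ^ 2 := by positivity
    linarith [hρnn]
  have hsd2 : sd ^ 2 = σ0 ^ 2 + 4 * δ ^ 2 * σF ^ 2 + 4 * δ * σ0 * σF * ρ := by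
    rw [hsd, sigD]; rw [Real.sq_sqrt (by linarith [harg, sq_nonneg σ0])]
  have hsdpos : 0 < sd := by
    rw [hsd, sigD]
    exact Real.sqrt_pos.2 (lt_of_lt_of_le (pow_pos hσ0pos 2) harg)
  set c := σ / sd with hcdef
  have hcpos : 0 < c := div_pos hσpos hsdpos
  have hcsd : c * sd = σ := div_mul_cancel₀ _ hsdpos.ne'
  have hc2 : c ^ 2 * sd ^ 2 = σ ^ 2 := by linear_combination (c * sd + σ) * hcsd
  have hgsq : (∫ u, γ u ^ 2 ∂nuI) + 4 * δ * (∫ u, γ u * qF u ∂nuI)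
      + 4 * δ ^ 2 * (μF ^ 2 + σF ^ 2) = sd ^ 2 + (1 + 2 * δ * μF) ^ 2 := by
    rw [hsd2, hσ0sq]
    linear_combination (-4 * δ) * hρval
  have iγqF : Integrable (fun u => γ u * qF u) nuI := integrable_mul' hγ' hqF'
  have hG' : SqInt' (fun u => γ u + 2 * δ * qF u - (1 + 2 * δ * μF)) :=
    (hγ'.add' (hqF'.const_mul' (2 * δ))).sub' (sqInt'_const _)
  have hG2 : ∫ u, (γ u + 2 * δ * qF u - (1 + 2 * δ * μF)) ^ 2 ∂nuI = sd ^ 2 := by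
    rw [show (fun u => (γ u + 2 * δ * qF u - (1 + 2 * δ * μF)) ^ 2)
        = fun u => ((1 + 2 * δ * μF) ^ 2) + (-2 * (1 + 2 * δ * μF)) * γ u
          + (-4 * δ * (1 + 2 * δ * μF)) * qF u + 1 * γ u ^ 2 + (4 * δ ^ 2) * qF u ^ 2
          + (4 * δ) * (γ u * qF u) + 0 * γ u from funext fun u => by ring,
      int_comb6 hγ'.1 hqF'.1 hγ'.2 hqF'.2 iγqF hγ'.1, e1, e2, e3]
    linear_combination hgsq
  -- the optimizer pointwise descriptions
  have hfe1 : (fun u => qD μ σ μF σ0 σF ρ δ γ qF u)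
      = fun u => (μ - c * (1 + 2 * δ * μF)) + c * γ u + (2 * δ * c) * qF u
        + 0 * γ u + 0 * γ u + 0 * γ u + 0 * γ u := by
    funext u; simp only [qD]; rw [← hsd, ← hcdef]; ring
  have hfe1' : (fun u => qD μ σ μF σ0 σF ρ δ γ qF u)
      = fun u => (μ - c * (1 + 2 * δ * μF)) + (c * γ u + (2 * δ * c) * qF u) := by
    funext u; simp only [qD]; rw [← hsd, ← hcdef]; ring
  have hfe2 : (fun u => qD μ σ μF σ0 σF ρ δ γ qF u ^ 2)
      = fun u => ((μ - c * (1 + 2 * δ * μF)) ^ 2)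
        + (2 * (μ - c * (1 + 2 * δ * μF)) * c) * γ u
        + (4 * δ * (μ - c * (1 + 2 * δ * μF)) * c) * qF u
        + (c ^ 2) * γ u ^ 2 + (4 * δ ^ 2 * c ^ 2) * qF u ^ 2
        + (4 * δ * c ^ 2) * (γ u * qF u) := by
    funext u; simp only [qD]; rw [← hsd, ← hcdef]; ring
  have hqD' : SqInt' (fun u => qD μ σ μF σ0 σF ρ δ γ qF u) := by
    rw [hfe1']
    exact (sqInt'_const _).add' ((hγ'.const_mul' c).add' (hqF'.const_mul' (2 * δ * c)))
  have hqDmean : ∫ u, qD μ σ μF σ0 σF ρ δ γ qF u ∂nuI = μ := by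
    rw [hfe1, int_comb6 hγ'.1 hqF'.1 hγ'.1 hγ'.1 hγ'.1 hγ'.1, e1, e2]
    ring
  have hqD2 : ∫ u, qD μ σ μF σ0 σF ρ δ γ qF u ^ 2 ∂nuI = μ ^ 2 + σ ^ 2 := by
    rw [hfe2]
    rw [show (fun u => ((μ - c * (1 + 2 * δ * μF)) ^ 2)
        + (2 * (μ - c * (1 + 2 * δ * μF)) * c) * γ u
        + (4 * δ * (μ - c * (1 + 2 * δ * μF)) * c) * qF u
        + (c ^ 2) * γ u ^ 2 + (4 * δ ^ 2 * c ^ 2) * qF u ^ 2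
        + (4 * δ * c ^ 2) * (γ u * qF u))
      = fun u => ((μ - c * (1 + 2 * δ * μF)) ^ 2)
        + (2 * (μ - c * (1 + 2 * δ * μF)) * c) * γ u
        + (4 * δ * (μ - c * (1 + 2 * δ * μF)) * c) * qF u
        + (c ^ 2) * γ u ^ 2 + (4 * δ ^ 2 * c ^ 2) * qF u ^ 2
        + (4 * δ * c ^ 2) * (γ u * qF u) + 0 * γ u from funext fun u => by ring,
      int_comb6 hγ'.1 hqF'.1 hγ'.2 hqF'.2 iγqF hγ'.1, e1, e2, e3]
    linear_combination c ^ 2 * hgsq + hc2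
  have hmono : MonotoneOn (qD μ σ μF σ0 σF ρ δ γ qF) I01 := by
    intro u hu v hv huv
    have h1 := hγmono hu hv huv
    have h2 := hqFmono hu hv huv
    have h3 : γ u + 2 * δ * qF u ≤ γ v + 2 * δ * qF v := by
      have h5 := mul_le_mul_of_nonneg_left h2 (by positivity : (0:ℝ) ≤ 2 * δ)
      linarith
    have h4 := mul_le_mul_of_nonneg_left h3 hcpos.le
    simp only [qD]; rw [← hsd, ← hcdef]
    linarith
  refine ⟨⟨⟨hmono, hqD'.1, hqD'.2⟩, hqDmean, hqD2⟩, ?_⟩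
  intro q hq
  obtain ⟨⟨hqmono, hqsq⟩, hqm, hq2⟩ := hq
  have hq' : SqInt' q := ⟨hqsq.1, hqsq.2⟩
  have e5 : ∫ u, q u ∂nuI = μ := hqm
  have e6 : ∫ u, q u ^ 2 ∂nuI = μ ^ 2 + σ ^ 2 := hq2
  have iγq : Integrable (fun u => γ u * q u) nuI := integrable_mul' hγ' hq'
  have iqFq : Integrable (fun u => qF u * q u) nuI := integrable_mul' hqF' hq'
  have hF' : SqInt' (fun u => q u - μ) := hq'.sub' (sqInt'_const μ)
  have hF2 : ∫ u, (q u - μ) ^ 2 ∂nuI = σ ^ 2 := by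
    rw [show (fun u => (q u - μ) ^ 2)
        = fun u => μ ^ 2 + (-2 * μ) * q u + 1 * q u ^ 2 + 0 * q u + 0 * q u + 0 * q u + 0 * q u
        from funext fun u => by ring,
      int_comb6 hq'.1 hq'.2 hq'.1 hq'.1 hq'.1 hq'.1, e5, e6]
    ring
  have hFG : ∫ u, (q u - μ) * (γ u + 2 * δ * qF u - (1 + 2 * δ * μF)) ∂nuI
      = (∫ u, γ u * q u ∂nuI) + 2 * δ * (∫ u, qF u * q u ∂nuI)
        - μ * (1 + 2 * δ * μF) := by
    rw [show (fun u => (q u - μ) * (γ u + 2 * δ * qF u - (1 + 2 * δ * μF)))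
        = fun u => (μ * (1 + 2 * δ * μF)) + (-μ) * γ u + (-2 * δ * μ) * qF u
          + (-(1 + 2 * δ * μF)) * q u + 1 * (γ u * q u) + (2 * δ) * (qF u * q u) + 0 * (γ u * q u)
        from funext fun u => by ring,
      int_comb6 hγ'.1 hqF'.1 hq'.1 iγq iqFq iγq, e1, e2, e5]
    ring
  have hiFG : Integrable
      (fun u => (q u - μ) * (γ u + 2 * δ * qF u - (1 + 2 * δ * μF))) nuI :=
    integrable_mul' hF' hG'
  have efun : (fun u => (q u - qD μ σ μF σ0 σF ρ δ γ qF u) ^ 2)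
      = fun u => 0 + 1 * ((q u - μ) ^ 2)
        + (-2 * c) * ((q u - μ) * (γ u + 2 * δ * qF u - (1 + 2 * δ * μF)))
        + c ^ 2 * ((γ u + 2 * δ * qF u - (1 + 2 * δ * μF)) ^ 2)
        + 0 * q u + 0 * q u + 0 * q u := by
    funext u; simp only [qD]; rw [← hsd, ← hcdef]; ring
  have hkey : ∫ u, (q u - qD μ σ μF σ0 σF ρ δ γ qF u) ^ 2 ∂nuI
      = 2 * σ ^ 2 - 2 * c * ((∫ u, γ u * q u ∂nuI)
        + 2 * δ * (∫ u, qF u * q u ∂nuI) - μ * (1 + 2 * δ * μF)) := by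
    rw [efun, int_comb6 hF'.2 hiFG hG'.2 hq'.1 hq'.1 hq'.1, hF2, hFG, hG2]
    linear_combination hc2
  have hW2 : W2 qF q = (μF ^ 2 + σF ^ 2)
      - 2 * (∫ u, qF u * q u ∂nuI) + (μ ^ 2 + σ ^ 2) := by
    show (∫ u, (qF u - q u) ^ 2 ∂nuI) = _
    rw [show (fun u => (qF u - q u) ^ 2)
        = fun u => 0 + 1 * qF u ^ 2 + (-2) * (qF u * q u) + 1 * q u ^ 2 + 0 * q u + 0 * q u + 0 * q u
        from funext fun u => by ring,
      int_comb6 hqF'.2 iqFq hq'.2 hq'.1 hq'.1 hq'.1, e3, e6]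
    ring
  have hJ : Jpen γ qF δ q = ((∫ u, γ u * q u ∂nuI)
      + 2 * δ * (∫ u, qF u * q u ∂nuI) - μ * (1 + 2 * δ * μF))
      + (μ - δ * (εmin + 2 * σ * σF)) := by
    show (∫ u, γ u * q u ∂nuI) - δ * W2 qF q = _
    rw [hW2, hεmin]; ring
  set K := (∫ u, γ u * q u ∂nuI) + 2 * δ * (∫ u, qF u * q u ∂nuI)
    - μ * (1 + 2 * δ * μF) with hK
  have hnn : 0 ≤ ∫ u, (q u - qD μ σ μF σ0 σF ρ δ γ qF u) ^ 2 ∂nuI :=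
    integral_nonneg fun u => sq_nonneg _
  have hKle : K ≤ σ * sd := by
    have h1 : c * K ≤ σ ^ 2 := by rw [hkey] at hnn; linarith
    have h2 : c * K * sd ≤ σ ^ 2 * sd := mul_le_mul_of_nonneg_right h1 hsdpos.le
    have h3 : σ * K = c * K * sd := by rw [← hcsd]; ring
    have h4 : σ * K ≤ σ * (σ * sd) := by rw [h3]; linarith [h2]
    exact le_of_mul_le_mul_left h4 hσpos
  constructor
  · rw [hJ]; linarith
  constructor
  · intro heq
    have hKeq : K = σ * sd := by
      rw [hJ] at heq; linarith
    have hzero : ∫ u, (q u - qD μ σ μF σ0 σF ρ δ γ qF u) ^ 2 ∂nuI = 0 := by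
      rw [hkey, hKeq]
      linear_combination (-2 * σ) * hcsd
    have hint : Integrable (fun u => (q u - qD μ σ μF σ0 σF ρ δ γ qF u) ^ 2) nuI := by
      rw [efun]
      exact integrable_comb6 hF'.2 hiFG hG'.2 hq'.1 hq'.1 hq'.1 _ _ _ _ _ _ _
    have hae0 := (integral_eq_zero_iff_of_nonneg (fun u => sq_nonneg _) hint).1 hzero
    show q =ᵐ[(volume : Measure ℝ).restrict (Ioo (0:ℝ) 1)] qD μ σ μF σ0 σF ρ δ γ qF
    filter_upwards [hae0] with u hu
    simp only [Pi.zero_apply] at hu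
    exact sub_eq_zero.1 (pow_eq_zero_iff two_ne_zero |>.1 hu)
  · intro hae
    have hae' : q =ᵐ[nuI] qD μ σ μF σ0 σF ρ δ γ qF := hae
    have hae0 : (fun u => (q u - qD μ σ μF σ0 σF ρ δ γ qF u) ^ 2)
        =ᵐ[nuI] (fun _ => (0:ℝ)) := by
      filter_upwards [hae'] with u hu
      simp [hu]
    have hzero : ∫ u, (q u - qD μ σ μF σ0 σF ρ δ γ qF u) ^ 2 ∂nuI = 0 := by
      rw [integral_congr_ae hae0]; simp
    rw [hkey] at hzero
    have h1 : c * K = c * (σ * sd) := by linear_combination (-1/2) * hzero + (-σ) * hcsd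
    have hKeq : K = σ * sd := mul_left_cancel₀ hcpos.ne' h1
    rw [hJ, hKeq]; ring
end
end

section
/- (Theorem 3.2(ii)) If q ∈ M(μ,σ) satisfies d²(q_F, q) = ε_min, then q(u) = μ − (σ/σ_F)μ_F + (σ/σ_F) q_F(u) for almost every u ∈ (0,1). Consequently M_{ε_min}(μ,σ) consists (up to a.e. equality) of exactly this one function, and for it J_δ(q) = μ + σσ₀ρ − δ ε_min for every δ ≥ 0. -/
open MeasureTheory Set Filter

noncomputable section

lemma intI_congr {f g : ℝ → ℝ} (h : ∀ u, f u = g u) : intI f = intI g := by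
  rw [funext h]

lemma intIconst : IntegrableOn (fun _ : ℝ => (c : ℝ)) (Ioo (0:ℝ) 1) volume :=
  (integrableOn_const_iff).mpr (Or.inr (by simp))

lemma sqInt_mul {f g : ℝ → ℝ} (hf : SqInt f) (hg : SqInt g) :
    IntegrableOn (fun u => f u * g u) (Ioo (0:ℝ) 1) volume := by
  have hb : IntegrableOn (fun u => (1/2 : ℝ) * (f u ^ 2 + g u ^ 2)) (Ioo (0:ℝ) 1) volume :=
    (hf.2.add hg.2).const_mul _
  refine hb.mono' (hf.1.aestronglyMeasurable.mul hg.1.aestronglyMeasurable) ?_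
  filter_upwards with u
  rw [Real.norm_eq_abs, abs_mul]
  nlinarith [sq_nonneg (|f u| - |g u|), sq_abs (f u), sq_abs (g u), abs_nonneg (f u),
    abs_nonneg (g u)]

lemma intI_lin {f : ℝ → ℝ} (hf : IntegrableOn f (Ioo (0:ℝ) 1) volume) (a c : ℝ) :
    intI (fun u => c + a * f u) = c + a * intI f := by
  unfold intI
  rw [integral_add intIconst (hf.const_mul a), integral_const_mul, integral_const]
  simp

lemma intI_sq {f g : ℝ → ℝ} (hf : SqInt f) (hg : SqInt g) (a b c : ℝ) :
    intI (fun u => (a * f u + b * g u + c) ^ 2) =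
      a^2 * intI (fun u => f u ^ 2) + b^2 * intI (fun u => g u ^ 2)
      + 2*(a*b) * intI (fun u => f u * g u) + 2*(a*c) * intI f + 2*(b*c) * intI g + c^2 := by
  have hA : IntegrableOn (fun u => a^2 * f u ^ 2) (Ioo (0:ℝ) 1) volume := hf.2.const_mul _
  have hB : IntegrableOn (fun u => b^2 * g u ^ 2) (Ioo (0:ℝ) 1) volume := hg.2.const_mul _
  have hC : IntegrableOn (fun u => 2*(a*b) * (f u * g u)) (Ioo (0:ℝ) 1) volume :=
    (sqInt_mul hf hg).const_mul _
  have hD : IntegrableOn (fun u => 2*(a*c) * f u) (Ioo (0:ℝ) 1) volume := hf.1.const_mul _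
  have hE : IntegrableOn (fun u => 2*(b*c) * g u) (Ioo (0:ℝ) 1) volume := hg.1.const_mul _
  have hF : IntegrableOn (fun _ : ℝ => c^2) (Ioo (0:ℝ) 1) volume := intIconst
  unfold intI
  rw [show (fun u => (a*f u + b*g u + c)^2) =
      (fun u => a^2*f u^2 + (b^2*g u^2 + (2*(a*b)*(f u*g u) + (2*(a*c)*f u + (2*(b*c)*g u + c^2)))))
      from funext fun u => by ring]
  have hT4 : IntegrableOn (fun u => 2*(b*c)*g u + c^2) (Ioo (0:ℝ) 1) volume := hE.add hF
  have hT3 : IntegrableOn (fun u => 2*(a*c)*f u + (2*(b*c)*g u + c^2)) (Ioo (0:ℝ) 1) volume :=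
    hD.add hT4
  have hT2 : IntegrableOn (fun u => 2*(a*b)*(f u*g u) + (2*(a*c)*f u + (2*(b*c)*g u + c^2)))
      (Ioo (0:ℝ) 1) volume := hC.add hT3
  have hT1 : IntegrableOn
      (fun u => b^2*g u^2 + (2*(a*b)*(f u*g u) + (2*(a*c)*f u + (2*(b*c)*g u + c^2))))
      (Ioo (0:ℝ) 1) volume := hB.add hT2
  rw [integral_add hA hT1, integral_add hB hT2, integral_add hC hT3, integral_add hD hT4,
      integral_add hE hF]
  rw [integral_const_mul, integral_const_mul, integral_const_mul, integral_const_mul,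
      integral_const_mul, integral_const]
  simp [Real.volume_Ioo]
  ring
theorem statement7
    (μ μF σ σF : ℝ) (hσpos : 0 < σ) (hσFpos : 0 < σF)
    (qF : ℝ → ℝ) (hqF : IsQuantile qF)
    (hqFm : intI qF = μF) (hqF2 : intI (fun u => qF u ^ 2) = μF ^ 2 + σF ^ 2)
    (γ : ℝ → ℝ) (hγmono : MonotoneOn γ (Ioo (0:ℝ) 1)) (hγsq : SqInt γ)
    (hγ1 : intI γ = 1)
    (σ0 : ℝ) (hσ0 : σ0 = Real.sqrt (intI (fun u => γ u ^ 2) - 1)) (hσ0pos : 0 < σ0)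
    (ρ : ℝ) (hρ : ρ = (intI (fun u => γ u * qF u) - μF) / (σ0 * σF))
    (εmin : ℝ) (hεmin : εmin = (μF - μ) ^ 2 + (σF - σ) ^ 2) :
    MemM μ σ (fun u => μ - σ / σF * μF + σ / σF * qF u) ∧
    W2 qF (fun u => μ - σ / σF * μF + σ / σF * qF u) = εmin ∧
    (∀ q : ℝ → ℝ, MemM μ σ q → W2 qF q = εmin →
      AeEqI q (fun u => μ - σ / σF * μF + σ / σF * qF u)) ∧
    ∀ δ : ℝ, 0 ≤ δ →
      Jpen γ qF δ (fun u => μ - σ / σF * μF + σ / σF * qF u) =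
        μ + σ * σ0 * ρ - δ * εmin := by
  have hσF' : σF ≠ 0 := ne_of_gt hσFpos
  have hXX : intI (fun u => qF u * qF u) = μF ^ 2 + σF ^ 2 :=
    (intI_congr (fun u => (pow_two (qF u)).symm)).trans hqF2
  -- Part 2 first (needed in part 4)
  have hW : W2 qF (fun u => μ - σ / σF * μF + σ / σF * qF u) = εmin := by
    simp only [W2]
    rw [intI_congr (fun u =>
        show (qF u - (μ - σ / σF * μF + σ / σF * qF u)) ^ 2 =
          ((1 - σ / σF) * qF u + 0 * qF u + (-(μ - σ / σF * μF))) ^ 2 from by ring),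
      intI_sq hqF.2 hqF.2, hqF2, hqFm, hXX, hεmin]
    field_simp
    ring
  refine ⟨⟨⟨?_, ?_, ?_⟩, ?_, ?_⟩, hW, ?_, ?_⟩
  · -- monotone
    intro x hx y hy hxy
    have h := hqF.1 hx hy hxy
    have ha : (0:ℝ) ≤ σ / σF := by positivity
    dsimp only
    nlinarith [mul_le_mul_of_nonneg_left h ha]
  · -- integrable
    exact intIconst.add (hqF.2.1.const_mul _)
  · -- square integrable
    have : (fun u => (μ - σ / σF * μF + σ / σF * qF u) ^ 2) =
        fun u => (σ / σF) ^ 2 * qF u ^ 2 +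
          (2 * (σ / σF) * (μ - σ / σF * μF) * qF u + (μ - σ / σF * μF) ^ 2) :=
      funext fun u => by ring
    rw [this]
    exact (hqF.2.2.const_mul _).add ((hqF.2.1.const_mul _).add intIconst)
  · -- mean
    rw [intI_lin hqF.2.1, hqFm]; ring
  · -- second moment
    rw [intI_congr (fun u =>
        show (μ - σ / σF * μF + σ / σF * qF u) ^ 2 =
          ((σ / σF) * qF u + 0 * qF u + (μ - σ / σF * μF)) ^ 2 from by ring),
      intI_sq hqF.2 hqF.2, hqF2, hqFm, hXX]
    field_simp
    ring
  · -- uniqueness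
    intro q hq hWq
    obtain ⟨⟨hqmono, hqSq⟩, hq1, hq2⟩ := hq
    have h1 : intI (fun u => (1 * qF u + (-1) * q u + 0) ^ 2) = εmin := by
      rw [← hWq]; simp only [W2]; exact intI_congr fun u => by ring
    rw [intI_sq hqF.2 hqSq, hqF2, hq2, hqFm, hq1, hεmin] at h1
    have hX : intI (fun u => qF u * q u) = μF * μ + σF * σ := by
      linear_combination (-1/2 : ℝ) * h1
    have hX' : intI (fun u => q u * qF u) = μF * μ + σF * σ :=
      (intI_congr (fun u => mul_comm _ _)).trans hX
    have hint0 : intI (fun u => (σF * q u + (-σ) * qF u + (-(σF * μ - σ * μF))) ^ 2) = 0 := by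
      rw [intI_sq hqSq hqF.2, hq2, hqF2, hq1, hqFm, hX']
      ring
    have hintg : IntegrableOn
        (fun u => (σF * q u + (-σ) * qF u + (-(σF * μ - σ * μF))) ^ 2) (Ioo (0:ℝ) 1) volume := by
      have : (fun u => (σF * q u + (-σ) * qF u + (-(σF * μ - σ * μF))) ^ 2) =
          fun u => σF ^ 2 * q u ^ 2 + (σ ^ 2 * qF u ^ 2 +
            ((-(2 * σF * σ)) * (q u * qF u) + ((-(2 * σF * (σF * μ - σ * μF))) * q u +
              ((2 * σ * (σF * μ - σ * μF)) * qF u + (σF * μ - σ * μF) ^ 2)))) :=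
        funext fun u => by ring
      rw [this]
      exact (hqSq.2.const_mul _).add ((hqF.2.2.const_mul _).add
        (((sqInt_mul hqSq hqF.2).const_mul _).add ((hqSq.1.const_mul _).add
          ((hqF.2.1.const_mul _).add intIconst))))
    unfold intI at hint0
    have hae := (integral_eq_zero_iff_of_nonneg_ae
      (Filter.Eventually.of_forall fun u => sq_nonneg _) hintg).mp hint0
    unfold AeEqI
    filter_upwards [hae] with u hu
    have h0 : σF * q u + (-σ) * qF u + (-(σF * μ - σ * μF)) = 0 := by
      have := pow_eq_zero_iff (n := 2) (by norm_num) |>.mp hu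
      exact this
    have : σF * q u = σ * qF u + σF * μ - σ * μF := by linarith
    field_simp
    linarith
  · -- objective value
    intro δ hδ
    simp only [Jpen]
    rw [hW]
    have hG : intI (fun u => γ u * (μ - σ / σF * μF + σ / σF * qF u)) =
        (μ - σ / σF * μF) * intI γ + (σ / σF) * intI (fun u => γ u * qF u) := by
      rw [intI_congr (fun u =>
        show γ u * (μ - σ / σF * μF + σ / σF * qF u) =
          (μ - σ / σF * μF) * γ u + (σ / σF) * (γ u * qF u) from by ring)]
      unfold intI
      rw [integral_add (hγsq.1.const_mul _) ((sqInt_mul hγsq hqF.2).const_mul _),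
        integral_const_mul, integral_const_mul]
    rw [hG, hγ1, hρ]
    field_simp
    ring
end
end
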